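/- Suppose φ satisfies φ'(t) ∼ t·φ''(t) for t > 0 with comparability constant c_φ, together with the Δ₂-condition for φ and φ*. Then for |s| < t/2 and t > 0, the averaged quantity |φ'(t+s)/(t+s) − φ'(t)/t| is bounded by c·(|s|/t)·φ''(t), where c depends only on c_φ and the Δ₂ constants. (Lipschitz estimate for the ratio φ'(t)/t via the fundamental theorem of calculus.) -/

import Mathlib

/-!
By the mean value theorem it suffices to bound the derivative
`(u φ''(u) - φ'(u)) / u²` of `u ↦ φ'(u) / u` on `[t/2, 3t/2]`. Since `u φ''(u) ∼ φ'(u)`, the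
numerator is at most `c_φ φ'(u)`; monotonicity and doubling give `φ'(u) ≤ C φ'(t)`, and
`φ'(t) ≤ c_φ t φ''(t)` by comparability again, while `u² ≥ t²/4`.
-/

open Set

theorem hasDerivAt_div_self_id {f : ℝ → ℝ} {f' x : ℝ} (hf : HasDerivAt f f' x) (hx : x ≠ 0) :
    HasDerivAt (fun u => f u / u) ((x * f' - f x) / x ^ 2) x :=
  (hf.div (hasDerivAt_id' x) hx).congr_deriv (by ring)

theorem abs_sub_le_of_inv_mul_le_of_le_mul {a b k : ℝ} (hk : 1 ≤ k) (hb : 0 ≤ b)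
    (hlow : k⁻¹ * b ≤ a) (hup : a ≤ k * b) : |a - b| ≤ k * b :=
  abs_sub_le_of_nonneg_of_le ((mul_nonneg (by positivity) hb).trans hlow) hup hb
    (le_mul_of_one_le_left hb hk)

theorem abs_ratio_deriv_le {φ' φ'' : ℝ → ℝ} {cφ C t u : ℝ}
    (hcφ : 1 ≤ cφ) (hC : 0 ≤ C)
    (hcomp : ∀ t : ℝ, 0 < t → cφ⁻¹ * φ' t ≤ t * φ'' t ∧ t * φ'' t ≤ cφ * φ' t)
    (hmono : ∀ s t : ℝ, 0 ≤ s → s ≤ t → φ' s ≤ φ' t)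
    (hnonneg : ∀ t : ℝ, 0 ≤ t → 0 ≤ φ' t)
    (hΔ2 : ∀ t : ℝ, 0 ≤ t → φ' (2 * t) ≤ C * φ' t)
    (ht : 0 < t) (hu : u ∈ Icc (t / 2) (2 * t)) :
    |(u * φ'' u - φ' u) / u ^ 2| ≤ 4 * cφ ^ 2 * C * φ'' t / t := by
  have hu0 : 0 < u := (half_pos ht).trans_le hu.1
  have hcφ0 : 0 < cφ := one_pos.trans_le hcφ
  have hnum : |u * φ'' u - φ' u| ≤ cφ * φ' u :=
    abs_sub_le_of_inv_mul_le_of_le_mul hcφ (hnonneg u hu0.le) (hcomp u hu0).1 (hcomp u hu0).2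
  have hdoubling : φ' u ≤ C * φ' t := (hmono u (2 * t) hu0.le hu.2).trans (hΔ2 t ht.le)
  have hφ't : φ' t ≤ cφ * (t * φ'' t) := (inv_mul_le_iff₀ hcφ0).1 (hcomp t ht).1
  have hφ''t : 0 ≤ φ'' t := nonneg_of_mul_nonneg_right
    ((mul_nonneg (by positivity) (hnonneg t ht.le)).trans (hcomp t ht).1) ht
  have hsq : t ^ 2 / 4 ≤ u ^ 2 := by nlinarith [hu.1]
  rw [abs_div, abs_of_pos (pow_pos hu0 2), div_le_iff₀ (pow_pos hu0 2)]
  calc |u * φ'' u - φ' u| ≤ cφ * (C * (cφ * (t * φ'' t))) :=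
        hnum.trans (by gcongr; exact hdoubling.trans (by gcongr))
    _ = 4 * cφ ^ 2 * C * φ'' t / t * (t ^ 2 / 4) := by field_simp
    _ ≤ 4 * cφ ^ 2 * C * φ'' t / t * u ^ 2 := by gcongr


/-- Lipschitz estimate for the ratio `φ'(t)/t`: if `φ'(t) ∼ t φ''(t)` (with constant
`c_φ`) and `φ'` satisfies suitable `Δ₂`-type doubling, then for `|s| < t/2`,
`|φ'(t+s)/(t+s) − φ'(t)/t| ≤ c (|s|/t) φ''(t)`. -/
theorem ratio_lipschitz_estimate
    (φ' φ'' : ℝ → ℝ) (cφ C : ℝ)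
    (hcφ : 1 ≤ cφ) (hC : 1 ≤ C)
    (hderiv : ∀ t : ℝ, 0 < t → HasDerivAt φ' (φ'' t) t)
    (hcomp : ∀ t : ℝ, 0 < t → cφ⁻¹ * φ' t ≤ t * φ'' t ∧ t * φ'' t ≤ cφ * φ' t)
    (hmono : ∀ s t : ℝ, 0 ≤ s → s ≤ t → φ' s ≤ φ' t)
    (hnonneg : ∀ t : ℝ, 0 ≤ t → 0 ≤ φ' t)
    (hΔ2 : ∀ t : ℝ, 0 ≤ t → φ' (2 * t) ≤ C * φ' t) :
    ∃ c : ℝ, 0 < c ∧ ∀ t s : ℝ, 0 < t → |s| < t / 2 →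
      |φ' (t + s) / (t + s) - φ' t / t| ≤ c * (|s| / t) * φ'' t := by
  refine ⟨4 * cφ ^ 2 * C, by positivity, fun t s ht hs => ?_⟩
  obtain ⟨hs_lo, hs_hi⟩ := abs_lt.1 hs
  have hderiv_ratio : ∀ u ∈ Icc (t / 2) (3 * t / 2), HasDerivWithinAt (fun u => φ' u / u)
      ((u * φ'' u - φ' u) / u ^ 2) (Icc (t / 2) (3 * t / 2)) u := fun u hu =>
    have hu0 : 0 < u := (half_pos ht).trans_le hu.1
    (hasDerivAt_div_self_id (hderiv u hu0) hu0.ne').hasDerivWithinAt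
  have hbound : ∀ u ∈ Icc (t / 2) (3 * t / 2),
      ‖(u * φ'' u - φ' u) / u ^ 2‖ ≤ 4 * cφ ^ 2 * C * φ'' t / t := fun u hu =>
    abs_ratio_deriv_le hcφ (by linarith) hcomp hmono hnonneg hΔ2 ht ⟨hu.1, by linarith [hu.2]⟩
  have hmvt := (convex_Icc _ _).norm_image_sub_le_of_norm_hasDerivWithin_le hderiv_ratio hbound
    (⟨by linarith, by linarith⟩ : t ∈ Icc (t / 2) (3 * t / 2))
    (⟨by linarith, by linarith⟩ : t + s ∈ Icc (t / 2) (3 * t / 2))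
  rw [Real.norm_eq_abs, Real.norm_eq_abs, add_sub_cancel_left] at hmvt
  calc |φ' (t + s) / (t + s) - φ' t / t| ≤ 4 * cφ ^ 2 * C * φ'' t / t * |s| := hmvt
    _ = 4 * cφ ^ 2 * C * (|s| / t) * φ'' t := by ring
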